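/- arXiv:2112.04622 — 6 statements merged into one kernel-verified Lean document; each statement's English description precedes it below -/
import Mathlib

section
/- Consider N+1 types indexed by i ∈ {0,1,…,N} and reals λ_i ≥ 0 with Σ_{i=0}^{N} λ_i = 1. Define counts A^0_i = 0 for all i, and for each t ≥ 1 let A^t = A^{t−1} + e_{i_t}, where i_t is any index attaining the minimum of A^{t−1}_i − λ_i·(t−1) over i ∈ {0,…,N} (ties broken arbitrarily). Then for every t ≥ 0 and every i: −N ≤ A^t_i − λ_i·t ≤ 1. Moreover, if in addition λ_i > 0 for every i and T is a natural number with λ_i·T ∈ ℕ for every i, then A^T_i = λ_i·T for every i. -/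
/-- Greedy deficit-minimizing injection: bounded discrepancy at all times,
and exact counts at any horizon `T` where all `λ_i * T` are integers. -/
theorem greedy_injection_bounded_discrepancy
    (N : ℕ) (lam : Fin (N + 1) → ℝ)
    (hnn : ∀ i, 0 ≤ lam i) (hsum : ∑ i, lam i = 1)
    (A : ℕ → Fin (N + 1) → ℕ) (idx : ℕ → Fin (N + 1))
    (hA0 : ∀ i, A 0 i = 0)
    (hmin : ∀ t j, (A t (idx t) : ℝ) - lam (idx t) * t ≤ (A t j : ℝ) - lam j * t)
    (hstep : ∀ t j, A (t + 1) j = A t j + (if j = idx t then 1 else 0)) :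
    (∀ t i, -(N : ℝ) ≤ (A t i : ℝ) - lam i * t ∧ (A t i : ℝ) - lam i * t ≤ 1) ∧
    (∀ T : ℕ, (∀ i, 0 < lam i) → (∀ i, ∃ k : ℕ, lam i * T = (k : ℝ)) →
      ∀ i, (A T i : ℝ) = lam i * T) := by
  -- total count is t
  have hsumA : ∀ t, ∑ i, (A t i : ℝ) = t := by
    intro t
    induction t with
    | zero => simp [hA0]
    | succ t ih =>
      have hc : ∀ j : Fin (N + 1), ((A (t + 1) j : ℝ))
          = (A t j : ℝ) + (if j = idx t then 1 else 0) := by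
        intro j; rw [hstep]; split <;> push_cast <;> simp
      rw [Finset.sum_congr rfl fun j _ => hc j, Finset.sum_add_distrib, ih,
        Finset.sum_ite_eq' Finset.univ (idx t) (fun _ => (1 : ℝ))]
      simp
  have hsumD : ∀ t, ∑ i, ((A t i : ℝ) - lam i * t) = 0 := by
    intro t
    rw [Finset.sum_sub_distrib, hsumA, ← Finset.sum_mul, hsum]; ring
  -- the minimum deficit is nonpositive
  have hminle : ∀ t, (A t (idx t) : ℝ) - lam (idx t) * t ≤ 0 := by
    intro t
    have h1 : ((N : ℝ) + 1) * ((A t (idx t) : ℝ) - lam (idx t) * t) ≤ 0 := by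
      calc ((N : ℝ) + 1) * ((A t (idx t) : ℝ) - lam (idx t) * t)
          = ∑ _i : Fin (N + 1), ((A t (idx t) : ℝ) - lam (idx t) * t) := by
            simp [Finset.sum_const, nsmul_eq_mul]; ring
        _ ≤ ∑ i, ((A t i : ℝ) - lam i * t) := Finset.sum_le_sum fun j _ => hmin t j
        _ = 0 := hsumD t
    nlinarith [Nat.cast_nonneg (α := ℝ) N]
  -- upper bound
  have hub : ∀ t i, (A t i : ℝ) - lam i * t ≤ 1 := by
    intro t
    induction t with
    | zero => intro i; simp [hA0]
    | succ t ih =>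
      intro i
      rw [hstep]
      by_cases h : i = idx t
      · subst h
        have := hminle t
        have := hnn (idx t)
        simp only [if_pos rfl]
        push_cast
        nlinarith
      · have := ih i
        have := hnn i
        simp only [if_neg h]
        push_cast
        nlinarith
  -- lower bound
  have hlb : ∀ t i, -(N : ℝ) ≤ (A t i : ℝ) - lam i * t := by
    intro t i
    have hsplit := Finset.add_sum_erase Finset.univ
      (fun j => (A t j : ℝ) - lam j * t) (Finset.mem_univ i)
    rw [hsumD t] at hsplit
    have hle : ∑ j ∈ Finset.univ.erase i, ((A t j : ℝ) - lam j * t)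
        ≤ (Finset.univ.erase i).card • (1 : ℝ) :=
      Finset.sum_le_card_nsmul _ _ _ fun j _ => hub t j
    have hcard : (Finset.univ.erase i).card = N := by
      rw [Finset.card_erase_of_mem (Finset.mem_univ i)]; simp
    rw [hcard, nsmul_eq_mul, mul_one] at hle
    linarith
  refine ⟨fun t i => ⟨hlb t i, hub t i⟩, ?_⟩
  intro T hpos hint
  -- strict upper bound under positivity
  have hub' : ∀ t i, (A t i : ℝ) - lam i * t < 1 := by
    intro t
    induction t with
    | zero => intro i; simp [hA0]
    | succ t ih =>
      intro i
      rw [hstep]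
      by_cases h : i = idx t
      · subst h
        have := hminle t
        have := hpos (idx t)
        simp only [if_pos rfl]
        push_cast
        nlinarith
      · have := ih i
        have := hnn i
        simp only [if_neg h]
        push_cast
        nlinarith
  set k : Fin (N + 1) → ℕ := fun i => (hint i).choose with hkdef
  have hk : ∀ i, lam i * T = (k i : ℝ) := fun i => (hint i).choose_spec
  have hAk : ∀ i, A T i ≤ k i := by
    intro i
    have h1 := hub' T i
    rw [hk i] at h1
    have : (A T i : ℝ) < (k i : ℝ) + 1 := by linarith
    exact_mod_cast Nat.lt_succ_iff.mp (by exact_mod_cast this)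
  have hsumk : ∑ i, (k i : ℝ) = T := by
    calc ∑ i, (k i : ℝ) = ∑ i, lam i * T := Finset.sum_congr rfl fun i _ => (hk i).symm
      _ = (∑ i, lam i) * T := by rw [Finset.sum_mul]
      _ = T := by rw [hsum, one_mul]
  have heq : ∀ i, (A T i : ℝ) = (k i : ℝ) := by
    intro i
    by_contra hne
    have hlt : (A T i : ℝ) < (k i : ℝ) := lt_of_le_of_ne (by exact_mod_cast hAk i) hne
    have : ∑ j, (A T j : ℝ) < ∑ j, (k j : ℝ) :=
      Finset.sum_lt_sum (fun j _ => by exact_mod_cast hAk j) ⟨i, Finset.mem_univ i, hlt⟩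
    rw [hsumA T, hsumk] at this
    exact lt_irrefl _ this
  intro i
  rw [heq i, hk i]
end

section
/- Consider N+1 types indexed by i ∈ {0,1,…,N} and reals λ_i > 0 with Σ_{i=0}^{N} λ_i = 1. Define counts A^0_i = 0 for all i, and for each t ≥ 1 let A^t = A^{t−1} + e_{i_t}, where i_t is any index attaining the minimum of A^{t−1}_i − λ_i·(t−1) over i ∈ {0,…,N} (ties broken arbitrarily). Let τ be any natural number with λ_i·τ ≥ N+1 for every i. Then for every i and every natural number t with τ ≤ t: λ_i·(t − 2τ) ≤ A^t_i − A^τ_i ≤ λ_i·t. -/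
/-- Greedy deficit-minimizing injection: for any window bound `τ` with
`λ_i · τ ≥ N + 1` for all `i`, the number of injections of type `i` during
steps `τ+1,…,t` is sandwiched between `λ_i (t − 2τ)` and `λ_i t`. -/
theorem greedy_injection_window_bound
    (N : ℕ) (lam : Fin (N + 1) → ℝ)
    (hpos : ∀ i, 0 < lam i) (hsum : ∑ i, lam i = 1)
    (A : ℕ → Fin (N + 1) → ℕ) (idx : ℕ → Fin (N + 1))
    (hA0 : ∀ i, A 0 i = 0)
    (hmin : ∀ t j, (A t (idx t) : ℝ) - lam (idx t) * t ≤ (A t j : ℝ) - lam j * t)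
    (hstep : ∀ t j, A (t + 1) j = A t j + (if j = idx t then 1 else 0))
    (τ : ℕ) (hτ : ∀ i, (N : ℝ) + 1 ≤ lam i * τ) :
    ∀ i, ∀ t : ℕ, τ ≤ t →
      lam i * ((t : ℝ) - 2 * τ) ≤ (A t i : ℝ) - (A τ i : ℝ) ∧
      (A t i : ℝ) - (A τ i : ℝ) ≤ lam i * t := by
  -- total count equals t
  have hsumA : ∀ t, ∑ j, (A t j : ℝ) = t := by
    intro t
    induction t with
    | zero => simp [hA0]
    | succ t ih =>
      have h : ∀ j, (A (t+1) j : ℝ) = (A t j : ℝ) + (if j = idx t then (1:ℝ) else 0) := by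
        intro j; rw [hstep]; push_cast; split <;> simp
      simp only [h]
      rw [Finset.sum_add_distrib, ih, Finset.sum_ite_eq' Finset.univ (idx t)]
      simp
  -- sum of deficits is zero
  have hsumD : ∀ t, ∑ j, ((A t j : ℝ) - lam j * t) = 0 := by
    intro t
    rw [Finset.sum_sub_distrib, hsumA, ← Finset.sum_mul, hsum]; ring
  -- deficit upper bound
  have hup : ∀ t i, (A t i : ℝ) - lam i * t ≤ 1 := by
    intro t
    induction t with
    | zero => intro i; simp [hA0]
    | succ t ih =>
      intro i
      have hAe : (A (t+1) i : ℝ) = (A t i : ℝ) + (if i = idx t then (1:ℝ) else 0) := by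
        rw [hstep]; push_cast; split <;> simp
      by_cases h : i = idx t
      · -- the chosen index has deficit ≤ 0 (min ≤ average = 0)
        have hmin0 : (A t (idx t) : ℝ) - lam (idx t) * t ≤ 0 := by
          have h1 := Finset.card_nsmul_le_sum Finset.univ
            (fun j => (A t j : ℝ) - lam j * t)
            ((A t (idx t) : ℝ) - lam (idx t) * t) (fun j _ => hmin t j)
          rw [hsumD t] at h1
          simp only [Finset.card_univ, Fintype.card_fin, nsmul_eq_mul] at h1
          push_cast at h1
          have hN : (0:ℝ) < (N:ℝ) + 1 := by positivity
          nlinarith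
        subst h
        rw [hAe]
        simp only [if_pos rfl]
        have := hpos (idx t)
        push_cast
        nlinarith
      · rw [hAe]
        simp only [if_neg h]
        have := hpos i
        have := ih i
        push_cast
        nlinarith
  -- deficit lower bound
  have hlow : ∀ t i, -(N : ℝ) ≤ (A t i : ℝ) - lam i * t := by
    intro t i
    have h3 : ∑ j ∈ Finset.univ.erase i, ((A t j : ℝ) - lam j * t) ≤ (N : ℝ) := by
      have h := Finset.sum_le_card_nsmul (Finset.univ.erase i)
        (fun j => (A t j : ℝ) - lam j * t) 1 (fun j _ => hup t j)
      have hcard : (Finset.univ.erase i).card = N := by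
        rw [Finset.card_erase_of_mem (Finset.mem_univ i), Finset.card_univ,
          Fintype.card_fin]
        rfl
      rw [hcard] at h
      simpa using h
    have h4 : ((A t i : ℝ) - lam i * t)
        + ∑ j ∈ Finset.univ.erase i, ((A t j : ℝ) - lam j * t) = 0 := by
      have h5 := Finset.add_sum_erase Finset.univ
        (fun j => (A t j : ℝ) - lam j * t) (Finset.mem_univ i)
      rw [h5]
      exact hsumD t
    linarith
  intro i t ht
  have e1 : lam i * ((t : ℝ) - 2 * τ) = lam i * t - 2 * (lam i * τ) := by ring
  constructor
  · rw [e1]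
    have h1 := hup τ i
    have h2 := hlow t i
    have h3 := hτ i
    have h4 : lam i * τ ≤ lam i * t := by
      have := hpos i
      have : (τ : ℝ) ≤ t := by exact_mod_cast ht
      nlinarith [hpos i]
    linarith
  · have h1 := hup t i
    have h2 := hlow τ i
    have h3 := hτ i
    linarith
end

section
/- Let n ≥ 1 be an integer, let M be a nonempty finite index set with |M| ≤ n, and for each m ∈ M let ℓ_m be an integer with 2 ≤ ℓ_m ≤ n and q^m : ZMod ℓ_m → ℝ. Let Φ = Σ_{m ∈ M} Φ_{ℓ_m}(q^m). If Φ ≥ 4n⁴, then there exist m ∈ M and i ∈ ZMod ℓ_m such that Φ_{ℓ_m}(q^m + e_i) − Φ_{ℓ_m}(q^m) ≤ −√Φ / n². -/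
/-- The cyclic sum-of-squares potential `Φ_ℓ(q) = Σ_{k ∈ ZMod ℓ} (q k − q (k−1))²`
(summed via the enumeration `k ∈ {0,…,ℓ−1}` of `ZMod ℓ`). -/
noncomputable def cycPhi (ℓ : ℕ) (q : ZMod ℓ → ℝ) : ℝ :=
  ∑ k ∈ Finset.range ℓ, (q (k : ZMod ℓ) - q ((k : ZMod ℓ) - 1)) ^ 2

/-- The indicator vector `e_i : ZMod ℓ → ℝ`. -/
def eVec (ℓ : ℕ) (i : ZMod ℓ) : ZMod ℓ → ℝ := fun k => if k = i then 1 else 0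

/-!
Adding `e_i` changes `Φ_ℓ(q)` by `2 - 2 (δ_{i+1} - δ_i)`, so it suffices to find a cyclic second
difference `δ_{i+1} - δ_i ≥ √Φ / n²`; the hypothesis `Φ ≥ 4n⁴`, i.e. `2 ≤ √Φ / n²`, then absorbs
the constant `2`. By averaging, some `m` has `Φ ≤ n Φ_{ℓ_m}(q^m)` and some `k` has
`Φ_{ℓ_m}(q^m) ≤ ℓ_m δ_k²`. The differences `δ` sum to zero around the cycle, so they take values of
both signs, and walking around the cycle from one to the other in fewer than `ℓ_m` steps gives
`|δ_k| ≤ ℓ_m max_i (δ_{i+1} - δ_i)`. Altogether `√Φ ≤ n² max_i (δ_{i+1} - δ_i)`.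
-/

open Finset

lemma exists_sum_le_card_mul {α : Type*} [Fintype α] [Nonempty α] (f : α → ℝ) :
    ∃ a, ∑ x, f x ≤ Fintype.card α * f a := by
  obtain ⟨a, -, ha⟩ := exists_max_image univ f univ_nonempty
  exact ⟨a, by simpa using sum_le_card_nsmul univ f (f a) fun x _ ↦ ha x (mem_univ x)⟩

section ZModSums

variable {ℓ : ℕ}

lemma le_add_natCast_mul_of_forall_le {f : ZMod ℓ → ℝ} {g : ℝ}
    (hg : ∀ x, f (x + 1) - f x ≤ g) (a : ZMod ℓ) (t : ℕ) :
    f (a + t) ≤ f a + t * g := by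
  induction t with
  | zero => simp
  | succ t ih =>
    have := hg (a + t)
    push_cast at this ⊢
    rw [← add_assoc]
    linarith

variable [NeZero ℓ]

lemma sum_range_natCast_eq_sum (f : ZMod ℓ → ℝ) :
    ∑ k ∈ range ℓ, f k = ∑ x, f x := by
  apply sum_nbij' (fun k : ℕ ↦ (k : ZMod ℓ)) ZMod.val
  · simp
  · simp [ZMod.val_lt]
  · intro k hk
    simp [ZMod.val_natCast_of_lt (mem_range.mp hk)]
  · simp
  · simp

lemma cycPhi_eq_sum (q : ZMod ℓ → ℝ) : cycPhi ℓ q = ∑ x, (q x - q (x - 1)) ^ 2 :=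
  sum_range_natCast_eq_sum fun x ↦ (q x - q (x - 1)) ^ 2

lemma sum_sub_comp_sub_one (q : ZMod ℓ → ℝ) : ∑ x, (q x - q (x - 1)) = 0 := by
  rw [sum_sub_distrib, Fintype.sum_equiv (Equiv.subRight 1) (fun x ↦ q (x - 1)) q fun _ ↦ rfl,
    sub_self]

lemma sub_le_mul_of_forall_le {f : ZMod ℓ → ℝ} {g : ℝ} (hg₀ : 0 ≤ g)
    (hg : ∀ x, f (x + 1) - f x ≤ g) (a b : ZMod ℓ) : f b - f a ≤ ℓ * g := by
  have hb : a + ((b - a).val : ZMod ℓ) = b := by simp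
  have hstep := le_add_natCast_mul_of_forall_le hg a (b - a).val
  rw [hb] at hstep
  have hval : ((b - a).val : ℝ) ≤ ℓ := by exact_mod_cast (ZMod.val_lt (b - a)).le
  nlinarith

lemma abs_le_of_sum_eq_zero_of_forall_sub_le {f : ZMod ℓ → ℝ} {C : ℝ}
    (hsum : ∑ x, f x = 0) (hC : ∀ a b, f b - f a ≤ C) (k : ZMod ℓ) : |f k| ≤ C := by
  obtain ⟨j, -, hj⟩ := exists_le_of_sum_le (f := f) (g := 0) univ_nonempty (by simp [hsum])
  obtain ⟨j', -, hj'⟩ := exists_le_of_sum_le (f := 0) (g := f) univ_nonempty (by simp [hsum])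
  simp only [Pi.zero_apply] at hj hj'
  rw [abs_le]
  constructor <;> linarith [hC j k, hC k j']

lemma exists_abs_le_mul_sub {f : ZMod ℓ → ℝ} (hsum : ∑ x, f x = 0) (k : ZMod ℓ) :
    ∃ i, 0 ≤ f (i + 1) - f i ∧ |f k| ≤ ℓ * (f (i + 1) - f i) := by
  obtain ⟨i, -, hi⟩ := exists_max_image univ (fun x ↦ f (x + 1) - f x) univ_nonempty
  have hstep : ∀ x, f (x + 1) - f x ≤ f (i + 1) - f i := fun x ↦ hi x (mem_univ x)
  have hi₀ : 0 ≤ f (i + 1) - f i := by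
    have hshift : ∑ x, f (x + 1) = ∑ x, f x :=
      Fintype.sum_equiv (Equiv.addRight 1) (fun x ↦ f (x + 1)) f fun _ ↦ rfl
    obtain ⟨j, -, hj⟩ := exists_le_of_sum_le (f := 0) (g := fun x ↦ f (x + 1) - f x)
      univ_nonempty (by simp [sum_sub_distrib, hshift])
    exact (hj : (0 : ℝ) ≤ _).trans (hstep j)
  exact ⟨i, hi₀, abs_le_of_sum_eq_zero_of_forall_sub_le hsum
    (sub_le_mul_of_forall_le hi₀ hstep) k⟩

end ZModSums

lemma cycPhi_nonneg (ℓ : ℕ) (q : ZMod ℓ → ℝ) : 0 ≤ cycPhi ℓ q :=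
  sum_nonneg fun _ _ ↦ sq_nonneg _

lemma cycPhi_add_eVec_sub_cycPhi {ℓ : ℕ} (hℓ : 2 ≤ ℓ) (q : ZMod ℓ → ℝ) (i : ZMod ℓ) :
    cycPhi ℓ (q + eVec ℓ i) - cycPhi ℓ q
      = 2 - 2 * ((q (i + 1) - q i) - (q i - q (i - 1))) := by
  have : NeZero ℓ := ⟨by omega⟩
  have : Fact (1 < ℓ) := ⟨by omega⟩
  have hi : i + 1 ≠ i := by simp
  -- only the differences at `i` and `i + 1` involve `e_i`, and they are distinct because `ℓ ≥ 2`
  have hterm : ∀ x, ((q + eVec ℓ i) x - (q + eVec ℓ i) (x - 1)) ^ 2 - (q x - q (x - 1)) ^ 2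
      = (if x = i then 2 * (q i - q (i - 1)) + 1 else 0)
        + (if x = i + 1 then 1 - 2 * (q (i + 1) - q i) else 0) := by
    intro x
    simp only [Pi.add_apply, eVec, sub_eq_iff_eq_add]
    split_ifs <;> subst_vars <;>
      first | exact absurd ‹_ = _›.symm hi | (try simp only [add_sub_cancel_right]); ring
  rw [cycPhi_eq_sum, cycPhi_eq_sum, ← sum_sub_distrib, sum_congr rfl fun x _ ↦ hterm x,
    sum_add_distrib, sum_ite_eq', sum_ite_eq']
  simp only [mem_univ, if_true]
  ring

lemma exists_cycPhi_le_cube_mul_sq {ℓ : ℕ} [NeZero ℓ] (q : ZMod ℓ → ℝ) :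
    ∃ i, 0 ≤ (q (i + 1) - q i) - (q i - q (i - 1)) ∧
      cycPhi ℓ q ≤ ℓ ^ 3 * ((q (i + 1) - q i) - (q i - q (i - 1))) ^ 2 := by
  obtain ⟨k, hk⟩ := exists_sum_le_card_mul fun x : ZMod ℓ ↦ (q x - q (x - 1)) ^ 2
  obtain ⟨i, hi₀, hi⟩ := exists_abs_le_mul_sub (sum_sub_comp_sub_one q) k
  simp only [add_sub_cancel_right] at hi₀ hi
  rw [ZMod.card, ← cycPhi_eq_sum] at hk
  refine ⟨i, hi₀, hk.trans ?_⟩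
  calc (ℓ : ℝ) * (q k - q (k - 1)) ^ 2 ≤ ℓ * (ℓ * (q (i + 1) - q i - (q i - q (i - 1)))) ^ 2 := by
        gcongr ℓ * ?_
        exact sq_le_sq.2 (hi.trans (le_abs_self _))
    _ = _ := by ring

theorem exists_large_negative_drift_general
    (n : ℕ) (ι : Type) [Fintype ι] [Nonempty ι]
    (hcard : Fintype.card ι ≤ n)
    (ℓ : ι → ℕ) (hℓ2 : ∀ m, 2 ≤ ℓ m) (hℓn : ∀ m, ℓ m ≤ n)
    (q : ∀ m, ZMod (ℓ m) → ℝ)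
    (hΦ : 4 * (n : ℝ) ^ 4 ≤ ∑ m, cycPhi (ℓ m) (q m)) :
    ∃ m, ∃ i : ZMod (ℓ m),
      cycPhi (ℓ m) (q m + eVec (ℓ m) i) - cycPhi (ℓ m) (q m)
        ≤ -(Real.sqrt (∑ m, cycPhi (ℓ m) (q m)) / (n : ℝ) ^ 2) := by
  set Φ := ∑ m, cycPhi (ℓ m) (q m)
  obtain ⟨m, hm⟩ := exists_sum_le_card_mul fun m ↦ cycPhi (ℓ m) (q m)
  have : NeZero (ℓ m) := ⟨by linarith [hℓ2 m]⟩
  obtain ⟨i, hg₀, hi⟩ := exists_cycPhi_le_cube_mul_sq (q m)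
  set g := (q m (i + 1) - q m i) - (q m i - q m (i - 1))
  have hn : (0 : ℝ) < n := Nat.cast_pos.2 (by linarith [hℓ2 m, hℓn m])
  have hΦg : Φ ≤ ((n : ℝ) ^ 2 * g) ^ 2 :=
    calc Φ ≤ Fintype.card ι * cycPhi (ℓ m) (q m) := hm
      _ ≤ n * (ℓ m ^ 3 * g ^ 2) := by
        gcongr
        exact cycPhi_nonneg _ _
      _ ≤ n * (n ^ 3 * g ^ 2) := by gcongr; exact_mod_cast hℓn m
      _ = ((n : ℝ) ^ 2 * g) ^ 2 := by ring
  have hsqrt_le : √Φ ≤ n ^ 2 * g := Real.sqrt_le_left (by positivity) |>.2 hΦg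
  have hle_sqrt : 2 * (n : ℝ) ^ 2 ≤ √Φ :=
    Real.le_sqrt (by positivity) (hΦ.trans' (by positivity)) |>.2 (by linarith)
  have hg : √Φ / n ^ 2 ≤ g := div_le_of_le_mul₀ (by positivity) hg₀ (by linarith)
  have htwo : 2 ≤ √Φ / n ^ 2 := (le_div_iff₀ (by positivity)).2 hle_sqrt
  refine ⟨m, i, ?_⟩
  rw [cycPhi_add_eVec_sub_cycPhi (hℓ2 m)]
  linarith

/-- If the total cyclic sum-of-squares potential of at most `n` configurations
(each on at most `n` resource types) is at least `4n⁴`, then some configuration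
`m` and resource type `i` give a potential decrease of at least `√Φ / n²`. -/
theorem exists_large_negative_drift
    (n : ℕ) (hn : 1 ≤ n) (ι : Type) [Fintype ι] [Nonempty ι]
    (hcard : Fintype.card ι ≤ n)
    (ℓ : ι → ℕ) (hℓ2 : ∀ m, 2 ≤ ℓ m) (hℓn : ∀ m, ℓ m ≤ n)
    (q : ∀ m, ZMod (ℓ m) → ℝ)
    (hΦ : 4 * (n : ℝ) ^ 4 ≤ ∑ m, cycPhi (ℓ m) (q m)) :
    ∃ m, ∃ i : ZMod (ℓ m),
      cycPhi (ℓ m) (q m + eVec (ℓ m) i) - cycPhi (ℓ m) (q m)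
        ≤ -(Real.sqrt (∑ m, cycPhi (ℓ m) (q m)) / (n : ℝ) ^ 2) :=
  exists_large_negative_drift_general n ι hcard ℓ hℓ2 hℓn q hΦ
end

section
/- Let ℓ ≥ 2 be an integer, τ ≥ 0 a real, and q, q̂ : ZMod ℓ → ℝ with |q(k) − q̂(k)| ≤ τ for every k ∈ ZMod ℓ. Then for every i ∈ ZMod ℓ: |(Φ_ℓ(q̂ + e_i) − Φ_ℓ(q̂)) − (Φ_ℓ(q + e_i) − Φ_ℓ(q))| ≤ 8τ. -/
lemma cycPhi_eq_sum_univ (ℓ : ℕ) [NeZero ℓ] (q : ZMod ℓ → ℝ) :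
    cycPhi ℓ q = ∑ k : ZMod ℓ, (q k - q (k - 1)) ^ 2 := by
  refine Finset.sum_nbij' (fun k => (k : ZMod ℓ)) ZMod.val (fun _ _ => Finset.mem_univ _)
    (fun a _ => Finset.mem_range.2 (ZMod.val_lt a))
    (fun _ ha => ZMod.val_cast_of_lt (Finset.mem_range.1 ha))
    (fun a _ => ZMod.natCast_zmod_val a) (fun _ _ => rfl)

lemma cycPhi_add_eVec_sub (ℓ : ℕ) [Fact (1 < ℓ)] (q : ZMod ℓ → ℝ) (i : ZMod ℓ) :
    cycPhi ℓ (q + eVec ℓ i) - cycPhi ℓ q = 2 * (2 * q i - q (i - 1) - q (i + 1)) + 2 := by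
  rw [cycPhi_eq_sum_univ, cycPhi_eq_sum_univ, ← Finset.sum_sub_distrib]
  have hi_succ : i ≠ i + 1 := by simp
  have hi_pred : i - 1 ≠ i := by simp
  rw [Finset.sum_eq_add_of_mem i (i + 1) (Finset.mem_univ _) (Finset.mem_univ _) hi_succ]
  · simp only [Pi.add_apply, eVec, add_sub_cancel_right, if_pos, if_neg hi_pred,
      if_neg hi_succ.symm]
    ring
  · rintro k - ⟨hk, hk_succ⟩
    have hk_pred : k - 1 ≠ i := fun h => hk_succ (by rw [← h, sub_add_cancel])
    simp only [Pi.add_apply, eVec, if_neg hk, if_neg hk_pred, add_zero, sub_self]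

theorem cycPhi_cost_lipschitz_general
    (ℓ : ℕ) (hℓ : 2 ≤ ℓ) (τ : ℝ)
    (q qhat : ZMod ℓ → ℝ) (hclose : ∀ k, |q k - qhat k| ≤ τ) (i : ZMod ℓ) :
    |(cycPhi ℓ (qhat + eVec ℓ i) - cycPhi ℓ qhat)
      - (cycPhi ℓ (q + eVec ℓ i) - cycPhi ℓ q)| ≤ 8 * τ := by
  have : Fact (1 < ℓ) := ⟨hℓ⟩
  rw [cycPhi_add_eVec_sub, cycPhi_add_eVec_sub]
  obtain ⟨hi_lo, hi_hi⟩ := abs_le.1 (hclose i)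
  obtain ⟨hpred_lo, hpred_hi⟩ := abs_le.1 (hclose (i - 1))
  obtain ⟨hsucc_lo, hsucc_hi⟩ := abs_le.1 (hclose (i + 1))
  exact abs_le.2 ⟨by linarith, by linarith⟩

/-- Lipschitz cost lemma: if two queue states differ by at most `τ` in every
coordinate, the elementary costs of committing a type-`i` item differ by at
most `8τ`. -/
theorem cycPhi_cost_lipschitz
    (ℓ : ℕ) (hℓ : 2 ≤ ℓ) (τ : ℝ) (hτ : 0 ≤ τ)
    (q qhat : ZMod ℓ → ℝ) (hclose : ∀ k, |q k - qhat k| ≤ τ) (i : ZMod ℓ) :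
    |(cycPhi ℓ (qhat + eVec ℓ i) - cycPhi ℓ qhat)
      - (cycPhi ℓ (q + eVec ℓ i) - cycPhi ℓ q)| ≤ 8 * τ :=
  cycPhi_cost_lipschitz_general ℓ hℓ τ q qhat hclose i
end

section
/- Let a : ℕ → ℝ satisfy a(0) ≥ 0 and a(t+1) = a(t) + √(8·a(t)) + 2 for all t ≥ 0. Then for every t ≥ 0: √(8·a(t)) − √(8·a(0)) ≤ 4t + 2·ln(1 + 2t). -/
/-!
Since `8 (x + √(8x) + 2) = (√(8x) + 4)²`, the recursion makes `√(8 a t)` grow by exactly `4`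
per step, so `√(8 a t) - √(8 a 0) = 4 t`, and the logarithmic term is pure slack.
-/

open Real

theorem sqrt_eight_mul_add_sqrt_add_two {x : ℝ} (hx : 0 ≤ x) :
    √(8 * (x + √(8 * x) + 2)) = √(8 * x) + 4 := by
  have hsq : √(8 * x) ^ 2 = 8 * x := sq_sqrt (by positivity)
  rw [show 8 * (x + √(8 * x) + 2) = (√(8 * x) + 4) ^ 2 by nlinarith,
    sqrt_sq (by positivity)]

section Recursion

variable {a : ℕ → ℝ}

theorem nonneg_of_sqrt_recursion
    (hrec : ∀ t : ℕ, a (t + 1) = a t + √(8 * a t) + 2) (h0 : 0 ≤ a 0) (t : ℕ) : 0 ≤ a t := by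
  induction t with
  | zero => exact h0
  | succ n ih => rw [hrec n]; positivity

theorem sqrt_eight_mul_of_sqrt_recursion
    (hrec : ∀ t : ℕ, a (t + 1) = a t + √(8 * a t) + 2) (h0 : 0 ≤ a 0) (t : ℕ) :
    √(8 * a t) = √(8 * a 0) + 4 * t := by
  induction t with
  | zero => simp
  | succ n ih =>
    rw [hrec n, sqrt_eight_mul_add_sqrt_add_two (nonneg_of_sqrt_recursion hrec h0 n), ih]
    push_cast
    ring

end Recursion

/-- Growth bound for the recursion `a(t+1) = a(t) + √(8 a(t)) + 2`:
`√(8 a(t)) − √(8 a(0)) ≤ 4t + 2 ln(1 + 2t)`. -/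
theorem sqrt_recursion_growth_bound
    (a : ℕ → ℝ) (h0 : 0 ≤ a 0)
    (hrec : ∀ t : ℕ, a (t + 1) = a t + Real.sqrt (8 * a t) + 2) :
    ∀ t : ℕ, Real.sqrt (8 * a t) - Real.sqrt (8 * a 0)
      ≤ 4 * t + 2 * Real.log (1 + 2 * t) := by
  intro t
  have hlog : 0 ≤ log (1 + 2 * t) := log_nonneg (by linarith [Nat.cast_nonneg (α := ℝ) t])
  rw [sqrt_eight_mul_of_sqrt_recursion hrec h0 t]
  linarith
end

section
/- Let n ≥ 1 be an integer, let M be a finite index set with |M| ≤ n, and for each m ∈ M let ℓ_m be an integer with 1 ≤ ℓ_m ≤ n and q^m : ZMod ℓ_m → ℝ such that q^m(k) ≥ 0 for all k and q^m(k₀) = 0 for some k₀ ∈ ZMod ℓ_m. Then Σ_{m ∈ M} (max_{i ∈ ZMod ℓ_m} q^m(i)) ≤ n·√(Σ_{m ∈ M} Φ_{ℓ_m}(q^m)). -/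
open Finset

lemma Real.sum_le_sqrt_card_mul_sqrt_sum_sq {ι : Type*} (s : Finset ι) (f : ι → ℝ) :
    ∑ i ∈ s, f i ≤ √(#s : ℝ) * √(∑ i ∈ s, f i ^ 2) := by
  simpa [mul_comm] using Real.sum_mul_le_sqrt_mul_sqrt s f 1

lemma Real.sum_sqrt_le_sqrt_card_mul_sqrt_sum {ι : Type*} (s : Finset ι) {f : ι → ℝ}
    (hf : ∀ i ∈ s, 0 ≤ f i) :
    ∑ i ∈ s, √(f i) ≤ √(#s : ℝ) * √(∑ i ∈ s, f i) := by
  have hsq : ∑ i ∈ s, √(f i) ^ 2 = ∑ i ∈ s, f i :=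
    sum_congr rfl fun i hi => Real.sq_sqrt (hf i hi)
  simpa only [hsq] using Real.sum_le_sqrt_card_mul_sqrt_sum_sq s fun i => √(f i)

lemma sub_le_sum_range_abs_sub (f : ℕ → ℝ) (s : ℕ) :
    f s - f 0 ≤ ∑ t ∈ range s, |f (t + 1) - f t| := by
  rw [← sum_range_sub]
  exact sum_le_sum fun t _ => le_abs_self _

namespace ZMod

lemma sum_range_natCast {M : Type*} [AddCommMonoid M] (ℓ : ℕ) [NeZero ℓ] (g : ZMod ℓ → M) :
    ∑ k ∈ range ℓ, g k = ∑ k, g k := by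
  refine sum_bij' (fun k _ => (k : ZMod ℓ)) (fun k _ => k.val) ?_ ?_ ?_ ?_ ?_ <;>
    intro k hk
  · exact mem_univ _
  · exact mem_range.2 k.val_lt
  · exact val_cast_of_lt (mem_range.1 hk)
  · exact natCast_zmod_val k
  · rfl

variable {ℓ : ℕ} [NeZero ℓ]

lemma sub_le_sum_abs_sub_pred (q : ZMod ℓ → ℝ) (i j : ZMod ℓ) :
    q i - q j ≤ ∑ k, |q k - q (k - 1)| := by
  set g : ZMod ℓ → ℝ := fun k => |q k - q (k - 1)|
  have hstep : ∀ t : ℕ, |q (j + (t + 1 : ℕ)) - q (j + t)| = g (j + 1 + t) := fun t => by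
    simp only [g]; congr 3 <;> push_cast <;> ring
  calc q i - q j = q (j + ((i - j).val : ℕ)) - q (j + ((0 : ℕ) : ZMod ℓ)) := by simp
    _ ≤ ∑ t ∈ range (i - j).val, |q (j + (t + 1 : ℕ)) - q (j + t)| :=
        sub_le_sum_range_abs_sub (fun t => q (j + t)) _
    _ ≤ ∑ t ∈ range ℓ, |q (j + (t + 1 : ℕ)) - q (j + t)| :=
        sum_le_sum_of_subset_of_nonneg (range_subset_range.2 (i - j).val_lt.le)
          fun _ _ _ => abs_nonneg _
    _ = ∑ k, g (j + 1 + k) := by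
        simp only [hstep]
        exact sum_range_natCast ℓ fun k => g (j + 1 + k)
    _ = ∑ k, g k := Equiv.sum_comp (Equiv.addLeft (j + 1)) g

end ZMod

lemma le_sqrt_mul_sqrt_cycPhi {ℓ : ℕ} [NeZero ℓ] {q : ZMod ℓ → ℝ} {k₀ : ZMod ℓ}
    (hk₀ : q k₀ = 0) (i : ZMod ℓ) : q i ≤ √(ℓ : ℝ) * √(cycPhi ℓ q) := by
  have hΦ : cycPhi ℓ q = ∑ k, |q k - q (k - 1)| ^ 2 := by
    simp only [sq_abs, cycPhi]; exact ZMod.sum_range_natCast ℓ fun k => (q k - q (k - 1)) ^ 2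
  calc q i = q i - q k₀ := by rw [hk₀, sub_zero]
    _ ≤ ∑ k, |q k - q (k - 1)| := ZMod.sub_le_sum_abs_sub_pred q i k₀
    _ ≤ √(ℓ : ℝ) * √(cycPhi ℓ q) := by
        simpa [hΦ] using Real.sum_le_sqrt_card_mul_sqrt_sum_sq univ fun k => |q k - q (k - 1)|

theorem sum_max_queue_le_sqrt_potential_general
    (n : ℕ) (ι : Type) [Fintype ι]
    (hcard : Fintype.card ι ≤ n)
    (ℓ : ι → ℕ) (hℓ1 : ∀ m, 1 ≤ ℓ m) (hℓn : ∀ m, ℓ m ≤ n)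
    (q : ∀ m, ZMod (ℓ m) → ℝ)
    (hzero : ∀ m, ∃ k₀ : ZMod (ℓ m), q m k₀ = 0) :
    ∑ m, (Finset.range (ℓ m)).sup'
        (Finset.nonempty_range_iff.mpr (Nat.one_le_iff_ne_zero.mp (hℓ1 m)))
        (fun k => q m (k : ZMod (ℓ m)))
      ≤ n * Real.sqrt (∑ m, cycPhi (ℓ m) (q m)) := by
  have hmax : ∀ m, (range (ℓ m)).sup' (nonempty_range_iff.mpr (Nat.one_le_iff_ne_zero.mp (hℓ1 m)))
      (fun k => q m (k : ZMod (ℓ m))) ≤ √(n : ℝ) * √(cycPhi (ℓ m) (q m)) := fun m => by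
    have : NeZero (ℓ m) := .of_pos (hℓ1 m)
    obtain ⟨k₀, hk₀⟩ := hzero m
    refine sup'_le _ _ fun k _ => (le_sqrt_mul_sqrt_cycPhi hk₀ _).trans ?_
    gcongr
    exact hℓn m
  have hsum : ∑ m, √(cycPhi (ℓ m) (q m)) ≤ √(n : ℝ) * √(∑ m, cycPhi (ℓ m) (q m)) :=
    (Real.sum_sqrt_le_sqrt_card_mul_sqrt_sum univ fun m _ => cycPhi_nonneg _ _).trans
      (by gcongr; simpa using hcard)
  calc _ ≤ ∑ m, √(n : ℝ) * √(cycPhi (ℓ m) (q m)) := sum_le_sum fun m _ => hmax m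
    _ = √(n : ℝ) * ∑ m, √(cycPhi (ℓ m) (q m)) := (mul_sum ..).symm
    _ ≤ √(n : ℝ) * (√(n : ℝ) * √(∑ m, cycPhi (ℓ m) (q m))) := by gcongr
    _ = n * √(∑ m, cycPhi (ℓ m) (q m)) := by rw [← mul_assoc, Real.mul_self_sqrt n.cast_nonneg]

/-- If each queue vector `q^m` is nonnegative with at least one zero coordinate,
then the sum of the maximal queue lengths is bounded by `n √(Σ_m Φ_{ℓ_m}(q^m))`. -/
theorem sum_max_queue_le_sqrt_potential
    (n : ℕ) (hn : 1 ≤ n) (ι : Type) [Fintype ι]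
    (hcard : Fintype.card ι ≤ n)
    (ℓ : ι → ℕ) (hℓ1 : ∀ m, 1 ≤ ℓ m) (hℓn : ∀ m, ℓ m ≤ n)
    (q : ∀ m, ZMod (ℓ m) → ℝ)
    (hnonneg : ∀ m k, 0 ≤ q m k)
    (hzero : ∀ m, ∃ k₀ : ZMod (ℓ m), q m k₀ = 0) :
    ∑ m, (Finset.range (ℓ m)).sup'
        (Finset.nonempty_range_iff.mpr (Nat.one_le_iff_ne_zero.mp (hℓ1 m)))
        (fun k => q m (k : ZMod (ℓ m)))
      ≤ n * Real.sqrt (∑ m, cycPhi (ℓ m) (q m)) :=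
  sum_max_queue_le_sqrt_potential_general n ι hcard ℓ hℓ1 hℓn q hzero
end
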